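/- arXiv:0708.2666 — 5 statements merged into one kernel-verified Lean document; each statement's English description precedes it below -/
import Mathlib

section
/- Let a, b > 0 with a > b (more generally a·e^x - b·e^y > 0 on the domain considered). The function f(x, y) = log(a·e^x - b·e^y), defined on the open set where a·e^x > b·e^y, is concave. -/
/-!
Writing `a·e^x − b·e^y = e^x·(a − b·e^(y−x))` gives `f (x, y) = x + g (y − x)` with
`g u = log (a − b·e^u)`: a linear function plus a concave function of a linear form. The function
`g` is concave as the logarithm of the positive concave function `a − b·e^u`.
-/

open Real

theorem ConcaveOn.log {E : Type*} [AddCommMonoid E] [Module ℝ E] {s : Set E} {f : E → ℝ}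
    (hf : ConcaveOn ℝ s f) (hf_pos : ∀ x ∈ s, 0 < f x) :
    ConcaveOn ℝ s (fun x => Real.log (f x)) := by
  refine ⟨hf.1, fun x hx y hy α β hα hβ hαβ => ?_⟩
  have hcomb_pos : 0 < α • f x + β • f y :=
    convex_Ioi (0 : ℝ) (hf_pos x hx) (hf_pos y hy) hα hβ hαβ
  calc α • Real.log (f x) + β • Real.log (f y) ≤ Real.log (α • f x + β • f y) :=
        strictConcaveOn_log_Ioi.concaveOn.2 (hf_pos x hx) (hf_pos y hy) hα hβ hαβ
    _ ≤ Real.log (f (α • x + β • y)) := log_le_log hcomb_pos (hf.2 hx hy hα hβ hαβ)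

theorem concaveOn_log_sub_mul_exp {a b : ℝ} (hb : 0 ≤ b) :
    ConcaveOn ℝ {u | b * exp u < a} (fun u => Real.log (a - b * exp u)) := by
  have hconvex : ConvexOn ℝ Set.univ (fun u => b * exp u) := convexOn_exp.smul hb
  have hdom : Convex ℝ {u | b * exp u < a} := by simpa using hconvex.convex_lt a
  have hinner : ConcaveOn ℝ {u | b * exp u < a} (fun u => a - b * exp u) :=
    (concaveOn_const a hdom).sub (hconvex.subset (Set.subset_univ _) hdom)
  exact hinner.log fun u hu => sub_pos.mpr hu

theorem mul_exp_sub_mul_exp_eq (a b x y : ℝ) :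
    a * exp x - b * exp y = exp x * (a - b * exp (y - x)) := by
  rw [exp_sub]
  field_simp

theorem logDiffExp_concave_general (a b : ℝ) (hb : 0 < b) :
    ConcaveOn ℝ {p : ℝ × ℝ | b * Real.exp p.2 < a * Real.exp p.1}
      (fun p : ℝ × ℝ => Real.log (a * Real.exp p.1 - b * Real.exp p.2)) := by
  set L : ℝ × ℝ →ₗ[ℝ] ℝ := LinearMap.snd ℝ ℝ ℝ - LinearMap.fst ℝ ℝ ℝ
  have hL (p : ℝ × ℝ) : L p = p.2 - p.1 := rfl
  have hdom : {p : ℝ × ℝ | b * exp p.2 < a * exp p.1} = L ⁻¹' {u | b * exp u < a} := by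
    ext p
    simp only [Set.mem_ofPred_eq, Set.mem_preimage, hL, ← sub_pos (b := b * exp _),
      mul_exp_sub_mul_exp_eq a b p.1 p.2]
    exact mul_pos_iff_of_pos_left (exp_pos _)
  have hg := (concaveOn_log_sub_mul_exp (a := a) hb.le).comp_linearMap L
  rw [hdom]
  refine ((LinearMap.fst ℝ ℝ ℝ).concaveOn hg.1).add hg |>.congr fun p hp => ?_
  rw [Set.mem_preimage, Set.mem_ofPred_eq, hL] at hp
  simp only [Pi.add_apply, Function.comp_apply, LinearMap.fst_apply, hL,
    mul_exp_sub_mul_exp_eq a b p.1 p.2]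
  rw [log_mul (exp_ne_zero _) (sub_pos.mpr hp).ne', log_exp]

/-- For `a, b > 0`, the function `f (x, y) = log (a·e^x − b·e^y)`, defined on the open
set where `a·e^x > b·e^y`, is concave. -/
theorem logDiffExp_concave (a b : ℝ) (ha : 0 < a) (hb : 0 < b) :
    ConcaveOn ℝ {p : ℝ × ℝ | b * Real.exp p.2 < a * Real.exp p.1}
      (fun p : ℝ × ℝ => Real.log (a * Real.exp p.1 - b * Real.exp p.2)) :=
  logDiffExp_concave_general a b hb
end

section
/- Let f : ℝ → ℝ be continuous and piecewise of the form x ↦ log cosh(x − a_m) + b_m on consecutive intervals [x_m, x_{m+1}] (with x_0 = −∞, x_{N+1} = +∞), and suppose that at every breakpoint the left derivative of f is greater than or equal to the right derivative (Q-concavity). Fix i < j and let g(x) = log cosh(x − a) + b be a single function of this form with g(i) = f(i) and g(j) = f(j). Then f(x) ≥ g(x) for all x ∈ [i, j], and f(x) ≤ g(x) for all x outside [i, j]. -/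
/-
Write `g x = log cosh (x - a) + b`. On the `m`-th piece, `f - g` equals
`log cosh (x - c m) - log cosh (x - a)` up to a constant, and the identity
`2 cosh x cosh y = cosh (x + y) + cosh (x - y)` shows that this is strictly increasing when
`c m < a`, strictly decreasing when `a < c m`, and constant when `c m = a`.
Since `tanh` is strictly increasing, Q-concavity says exactly that the centres `c m` are
nondecreasing in `m`. Hence `f - g` is nondecreasing on the pieces left of any piece with
`c m ≤ a` and nonincreasing on the pieces right of any piece with `a ≤ c m`; gluing these
along the breakpoints and comparing with the zeros of `f - g` at `i` and `j` gives the claim.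
-/

open Set

section Subdivision

variable {α : Type*} [LinearOrder α] {N : ℕ} {u : Fin N → α}

def piece (u : Fin N → α) (m : Fin (N + 1)) : Set α :=
  {x | ∀ k : Fin N, ((k : ℕ) < (m : ℕ) → u k ≤ x) ∧ ((m : ℕ) ≤ (k : ℕ) → x ≤ u k)}

def piecesFrom (u : Fin N → α) (m : Fin (N + 1)) : Set α :=
  {x | ∀ k : Fin N, (k : ℕ) < (m : ℕ) → u k ≤ x}

def piecesUpTo (u : Fin N → α) (m : Fin (N + 1)) : Set α :=
  {x | ∀ k : Fin N, (m : ℕ) ≤ (k : ℕ) → x ≤ u k}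

theorem mem_piecesFrom_of_le {m : Fin (N + 1)} {x y : α} (hx : x ∈ piece u m) (hxy : x ≤ y) :
    y ∈ piecesFrom u m :=
  fun k hk => ((hx k).1 hk).trans hxy

theorem mem_piecesUpTo_of_le {m : Fin (N + 1)} {x y : α} (hy : y ∈ piece u m) (hxy : x ≤ y) :
    x ∈ piecesUpTo u m :=
  fun k hk => hxy.trans ((hy k).2 hk)

theorem exists_mem_piece (hu : Monotone u) (x : α) : ∃ m, x ∈ piece u m := by
  let p : ℕ → Prop := fun n => n = N ∨ ∃ h : n < N, x ≤ u ⟨n, h⟩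
  have hp : ∃ n, p n := ⟨N, Or.inl rfl⟩
  have hle : Nat.find hp ≤ N := Nat.find_min' hp (Or.inl rfl)
  refine ⟨⟨Nat.find hp, Nat.lt_succ_of_le hle⟩, fun k => ⟨fun hk => ?_, fun hk => ?_⟩⟩
  · have := Nat.find_min hp hk
    simp only [p, not_or, not_exists, not_le] at this
    exact (this.2 k.isLt).le
  · rcases Nat.find_spec hp with h | ⟨h, hxu⟩
    · simp only at hk; omega
    · exact hxu.trans (hu (Fin.le_def.2 hk))

theorem piecesFrom_last : piecesFrom u (Fin.last N) = piece u (Fin.last N) := by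
  ext x
  simp only [piece, piecesFrom, mem_ofPred_eq, Fin.val_last]
  exact ⟨fun h k => ⟨h k, fun hk => absurd k.isLt (by omega)⟩, fun h k => (h k).1⟩

theorem piecesFrom_castSucc (hu : Monotone u) (i : Fin N) :
    piecesFrom u i.castSucc = piece u i.castSucc ∪ piecesFrom u i.succ := by
  ext x
  simp only [piece, piecesFrom, mem_union, mem_ofPred_eq, Fin.val_castSucc, Fin.val_succ]
  constructor
  · intro h
    by_cases hxi : x ≤ u i
    · exact Or.inl fun k => ⟨h k, fun hk => hxi.trans (hu (Fin.le_def.2 hk))⟩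
    · refine Or.inr fun k hk => ?_
      rcases Nat.lt_succ_iff_lt_or_eq.1 hk with hk | hk
      · exact h k hk
      · exact (Fin.ext hk : k = i) ▸ (not_le.1 hxi).le
  · rintro (h | h) k hk
    · exact (h k).1 hk
    · exact h k (by omega)

theorem isGreatest_piece_castSucc (hu : Monotone u) (i : Fin N) :
    IsGreatest (piece u i.castSucc) (u i) :=
  ⟨fun _ => ⟨fun hk => hu (Fin.le_def.2 hk.le), fun hk => hu (Fin.le_def.2 hk)⟩,
    fun _ hx => (hx i).2 le_rfl⟩

theorem isLeast_piecesFrom_succ (hu : Monotone u) (i : Fin N) :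
    IsLeast (piecesFrom u i.succ) (u i) :=
  ⟨fun _ hk => hu (Fin.le_def.2 (Nat.le_of_lt_succ hk)), fun _ hx => hx i (Nat.lt_succ_self _)⟩

theorem piecesUpTo_zero : piecesUpTo u 0 = piece u 0 := by
  ext x
  simp only [piece, piecesUpTo, mem_ofPred_eq, Fin.val_zero]
  exact ⟨fun h k => ⟨fun hk => absurd hk (Nat.not_lt_zero _), h k⟩, fun h k => (h k).2⟩

theorem piecesUpTo_succ (hu : Monotone u) (i : Fin N) :
    piecesUpTo u i.succ = piecesUpTo u i.castSucc ∪ piece u i.succ := by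
  ext x
  simp only [piece, piecesUpTo, mem_union, mem_ofPred_eq, Fin.val_castSucc, Fin.val_succ]
  constructor
  · intro h
    by_cases hxi : u i ≤ x
    · exact Or.inr fun k => ⟨fun hk => (hu (Fin.le_def.2 (by omega))).trans hxi, h k⟩
    · refine Or.inl fun k hk => ?_
      rcases hk.lt_or_eq with hk | hk
      · exact h k hk
      · exact (Fin.ext hk.symm : k = i) ▸ (not_le.1 hxi).le
  · rintro (h | h) k hk
    · exact h k (by omega)
    · exact (h k).2 hk

theorem isGreatest_piecesUpTo_castSucc (hu : Monotone u) (i : Fin N) :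
    IsGreatest (piecesUpTo u i.castSucc) (u i) :=
  ⟨fun _ hk => hu (Fin.le_def.2 hk), fun _ hx => hx i le_rfl⟩

theorem isLeast_piece_succ (hu : Monotone u) (i : Fin N) :
    IsLeast (piece u i.succ) (u i) :=
  ⟨fun _ => ⟨fun hk => hu (Fin.le_def.2 (Nat.le_of_lt_succ hk)),
      fun hk => hu (Fin.le_def.2 (Nat.le_of_succ_le hk))⟩,
    fun _ hx => (hx i).1 (Nat.lt_succ_self _)⟩

theorem piecesFrom_induction {P : Set α → Prop} (hu : Monotone u)
    (hglue : ∀ ⦃s t : Set α⦄ ⦃c : α⦄, P s → P t → IsGreatest s c → IsLeast t c → P (s ∪ t))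
    (m : Fin (N + 1)) (hP : ∀ n, m ≤ n → P (piece u n)) : P (piecesFrom u m) := by
  induction m using Fin.reverseInduction with
  | last => exact piecesFrom_last (u := u) ▸ hP _ le_rfl
  | cast i ih =>
    rw [piecesFrom_castSucc hu]
    exact hglue (hP _ le_rfl) (ih fun n hn => hP n (Fin.castSucc_lt_succ.le.trans hn))
      (isGreatest_piece_castSucc hu i) (isLeast_piecesFrom_succ hu i)

theorem piecesUpTo_induction {P : Set α → Prop} (hu : Monotone u)
    (hglue : ∀ ⦃s t : Set α⦄ ⦃c : α⦄, P s → P t → IsGreatest s c → IsLeast t c → P (s ∪ t))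
    (m : Fin (N + 1)) (hP : ∀ n, n ≤ m → P (piece u n)) : P (piecesUpTo u m) := by
  induction m using Fin.induction with
  | zero => exact piecesUpTo_zero (u := u) ▸ hP _ le_rfl
  | succ i ih =>
    rw [piecesUpTo_succ hu]
    exact hglue (ih fun n hn => hP n (hn.trans Fin.castSucc_lt_succ.le)) (hP _ le_rfl)
      (isGreatest_piecesUpTo_castSucc hu i) (isLeast_piece_succ hu i)

end Subdivision

section DistanceLike

open Real

noncomputable def distLike (a b x : ℝ) : ℝ := log (cosh (x - a)) + b

theorem cosh_mul_cosh_lt_cosh_mul_cosh {s t c₁ c₂ : ℝ} (hst : s < t) (hc : c₁ < c₂) :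
    cosh (s - c₁) * cosh (t - c₂) < cosh (t - c₁) * cosh (s - c₂) := by
  have key : cosh (s - c₁ - (t - c₂)) < cosh (t - c₁ - (s - c₂)) := by
    rw [cosh_lt_cosh, abs_of_pos (by linarith : 0 < t - c₁ - (s - c₂)), abs_lt]
    constructor <;> linarith
  have expand (x y : ℝ) : cosh x * cosh y = (cosh (x + y) + cosh (x - y)) / 2 := by
    rw [cosh_add, cosh_sub]; ring
  rw [expand, expand, show t - c₁ + (s - c₂) = s - c₁ + (t - c₂) by ring]
  linarith

theorem strictMono_distLike_sub {c d a b : ℝ} (h : c < a) :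
    StrictMono fun x => distLike c d x - distLike a b x := by
  intro s t hst
  have := log_lt_log (by positivity) (cosh_mul_cosh_lt_cosh_mul_cosh hst h)
  rw [log_mul (cosh_pos _).ne' (cosh_pos _).ne', log_mul (cosh_pos _).ne' (cosh_pos _).ne'] at this
  simp only [distLike]
  linarith

theorem monotone_distLike_sub {c d a b : ℝ} (h : c ≤ a) :
    Monotone fun x => distLike c d x - distLike a b x := by
  rcases h.lt_or_eq with h | rfl
  · exact (strictMono_distLike_sub h).monotone
  · simp only [distLike, add_sub_add_left_eq_sub]
    exact monotone_const

theorem strictAnti_distLike_sub {c d a b : ℝ} (h : a < c) :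
    StrictAnti fun x => distLike c d x - distLike a b x := by
  simpa only [neg_sub] using (strictMono_distLike_sub (d := b) (b := d) h).neg

theorem antitone_distLike_sub {c d a b : ℝ} (h : a ≤ c) :
    Antitone fun x => distLike c d x - distLike a b x := by
  simpa only [neg_sub] using (monotone_distLike_sub (d := b) (b := d) h).neg

theorem strictMono_tanh : StrictMono tanh := by
  intro x y hxy
  by_contra! h
  have := artanh_le_artanh (neg_one_lt_tanh y) (tanh_lt_one x) h
  rw [artanh_tanh, artanh_tanh] at this
  linarith

end DistanceLike

section PiecewiseDistanceLike

variable {N : ℕ} {u : Fin N → ℝ} {c d : Fin (N + 1) → ℝ} {f : ℝ → ℝ} {a b : ℝ}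

theorem monotone_of_tanh_le
    (hQ : ∀ k : Fin N, Real.tanh (u k - c k.succ) ≤ Real.tanh (u k - c k.castSucc)) :
    Monotone c :=
  Fin.monotone_iff_le_succ.2 fun k => by linarith [strictMono_tanh.le_iff_le.1 (hQ k)]

theorem antitoneOn_piecesFrom (hu : Monotone u) (hc : Monotone c)
    (hf : ∀ m, EqOn f (distLike (c m) (d m)) (piece u m)) {m : Fin (N + 1)} (ha : a ≤ c m) :
    AntitoneOn (fun x => f x - distLike a b x) (piecesFrom u m) :=
  piecesFrom_induction hu (fun _ _ _ h₁ h₂ => h₁.union_right h₂) m fun n hn =>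
    ((antitone_distLike_sub (d := d n) (b := b) (ha.trans (hc hn))).antitoneOn _)
      |>.congr fun _ hx => by rw [hf n hx]

theorem strictAntiOn_piecesFrom (hu : Monotone u) (hc : Monotone c)
    (hf : ∀ m, EqOn f (distLike (c m) (d m)) (piece u m)) {m : Fin (N + 1)} (ha : a < c m) :
    StrictAntiOn (fun x => f x - distLike a b x) (piecesFrom u m) :=
  piecesFrom_induction hu (fun _ _ _ h₁ h₂ => h₁.union h₂) m fun n hn =>
    ((strictAnti_distLike_sub (d := d n) (b := b) (ha.trans_le (hc hn))).strictAntiOn _)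
      |>.congr fun _ hx => by rw [hf n hx]

theorem monotoneOn_piecesUpTo (hu : Monotone u) (hc : Monotone c)
    (hf : ∀ m, EqOn f (distLike (c m) (d m)) (piece u m)) {m : Fin (N + 1)} (ha : c m ≤ a) :
    MonotoneOn (fun x => f x - distLike a b x) (piecesUpTo u m) :=
  piecesUpTo_induction hu (fun _ _ _ h₁ h₂ => h₁.union_right h₂) m fun n hn =>
    ((monotone_distLike_sub (d := d n) (b := b) ((hc hn).trans ha)).monotoneOn _)
      |>.congr fun _ hx => by rw [hf n hx]

theorem strictMonoOn_piecesUpTo (hu : Monotone u) (hc : Monotone c)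
    (hf : ∀ m, EqOn f (distLike (c m) (d m)) (piece u m)) {m : Fin (N + 1)} (ha : c m < a) :
    StrictMonoOn (fun x => f x - distLike a b x) (piecesUpTo u m) :=
  piecesUpTo_induction hu (fun _ _ _ h₁ h₂ => h₁.union h₂) m fun n hn =>
    ((strictMono_distLike_sub (d := d n) (b := b) ((hc hn).trans_lt ha)).strictMonoOn _)
      |>.congr fun _ hx => by rw [hf n hx]


theorem distLike_le_of_mem_Icc (hu : Monotone u) (hc : Monotone c)
    (hf : ∀ m, EqOn f (distLike (c m) (d m)) (piece u m)) {i j x : ℝ}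
    (hi : f i = distLike a b i) (hj : f j = distLike a b j) (hx : x ∈ Icc i j) :
    distLike a b x ≤ f x := by
  obtain ⟨m, hm⟩ := exists_mem_piece hu x
  rcases le_total a (c m) with ha | ha
  · have := antitoneOn_piecesFrom hu hc hf (b := b) ha (mem_piecesFrom_of_le hm le_rfl)
      (mem_piecesFrom_of_le hm hx.2) hx.2
    linarith
  · have := monotoneOn_piecesUpTo hu hc hf (b := b) ha (mem_piecesUpTo_of_le hm hx.1)
      (mem_piecesUpTo_of_le hm le_rfl) hx.1
    linarith

theorem le_distLike_of_lt (hu : Monotone u) (hc : Monotone c)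
    (hf : ∀ m, EqOn f (distLike (c m) (d m)) (piece u m)) {i j x : ℝ} (hij : i < j)
    (hi : f i = distLike a b i) (hj : f j = distLike a b j) (hx : x < i) :
    f x ≤ distLike a b x := by
  obtain ⟨m, hm⟩ := exists_mem_piece hu i
  rcases le_or_gt (c m) a with ha | ha
  · have := monotoneOn_piecesUpTo hu hc hf (b := b) ha (mem_piecesUpTo_of_le hm hx.le)
      (mem_piecesUpTo_of_le hm le_rfl) hx.le
    linarith
  · have := strictAntiOn_piecesFrom hu hc hf (b := b) ha (mem_piecesFrom_of_le hm le_rfl)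
      (mem_piecesFrom_of_le hm hij.le) hij
    linarith

theorem le_distLike_of_gt (hu : Monotone u) (hc : Monotone c)
    (hf : ∀ m, EqOn f (distLike (c m) (d m)) (piece u m)) {i j x : ℝ} (hij : i < j)
    (hi : f i = distLike a b i) (hj : f j = distLike a b j) (hx : j < x) :
    f x ≤ distLike a b x := by
  obtain ⟨m, hm⟩ := exists_mem_piece hu j
  rcases le_or_gt a (c m) with ha | ha
  · have := antitoneOn_piecesFrom hu hc hf (b := b) ha (mem_piecesFrom_of_le hm le_rfl)
      (mem_piecesFrom_of_le hm hx.le) hx.le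
    linarith
  · have := strictMonoOn_piecesUpTo hu hc hf (b := b) ha (mem_piecesUpTo_of_le hm hij.le)
      (mem_piecesUpTo_of_le hm le_rfl) hij
    linarith

end PiecewiseDistanceLike

theorem pd_comparison_general (N : ℕ) (u : Fin N → ℝ) (hu : StrictMono u)
    (c d : Fin (N + 1) → ℝ) (f : ℝ → ℝ)
    (hpiece : ∀ (m : Fin (N + 1)) (x : ℝ),
      (∀ k : Fin N, ((k : ℕ) < (m : ℕ) → u k ≤ x) ∧ ((m : ℕ) ≤ (k : ℕ) → x ≤ u k)) →
      f x = Real.log (Real.cosh (x - c m)) + d m)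
    (hQ : ∀ k : Fin N, Real.tanh (u k - c k.succ) ≤ Real.tanh (u k - c k.castSucc))
    (i j : ℝ) (hij : i < j) (a b : ℝ)
    (hgi : Real.log (Real.cosh (i - a)) + b = f i)
    (hgj : Real.log (Real.cosh (j - a)) + b = f j) :
    (∀ x ∈ Set.Icc i j, Real.log (Real.cosh (x - a)) + b ≤ f x) ∧
    (∀ x : ℝ, x ∉ Set.Icc i j → f x ≤ Real.log (Real.cosh (x - a)) + b) := by
  have hc : Monotone c := monotone_of_tanh_le hQ
  have hf : ∀ m, EqOn f (distLike (c m) (d m)) (piece u m) := hpiece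
  refine ⟨fun x hx => distLike_le_of_mem_Icc hu.monotone hc hf hgi.symm hgj.symm hx,
    fun x hx => ?_⟩
  rcases not_and_or.1 hx with hxi | hxj
  · exact le_distLike_of_lt hu.monotone hc hf hij hgi.symm hgj.symm (not_le.1 hxi)
  · exact le_distLike_of_gt hu.monotone hc hf hij hgi.symm hgj.symm (not_le.1 hxj)

/-- Comparison lemma for Q-concave piecewise distance-like functions on `ℝ`.
`f` is continuous, equal to `x ↦ log cosh (x − c m) + d m` on the `m`-th interval of the
subdivision of `ℝ` by the breakpoints `u 0 < ⋯ < u (N−1)`, and Q-concave (at every breakpoint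
the left derivative is ≥ the right derivative).  If `g x = log cosh (x − a) + b` is a single
distance-like function agreeing with `f` at `i < j`, then `f ≥ g` on `[i, j]` and `f ≤ g`
outside of `[i, j]`. -/
theorem pd_comparison (N : ℕ) (u : Fin N → ℝ) (hu : StrictMono u)
    (c d : Fin (N + 1) → ℝ) (f : ℝ → ℝ) (hf : Continuous f)
    (hpiece : ∀ (m : Fin (N + 1)) (x : ℝ),
      (∀ k : Fin N, ((k : ℕ) < (m : ℕ) → u k ≤ x) ∧ ((m : ℕ) ≤ (k : ℕ) → x ≤ u k)) →
      f x = Real.log (Real.cosh (x - c m)) + d m)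
    (hQ : ∀ k : Fin N, Real.tanh (u k - c k.succ) ≤ Real.tanh (u k - c k.castSucc))
    (i j : ℝ) (hij : i < j) (a b : ℝ)
    (hgi : Real.log (Real.cosh (i - a)) + b = f i)
    (hgj : Real.log (Real.cosh (j - a)) + b = f j) :
    (∀ x ∈ Set.Icc i j, Real.log (Real.cosh (x - a)) + b ≤ f x) ∧
    (∀ x : ℝ, x ∉ Set.Icc i j → f x ≤ Real.log (Real.cosh (x - a)) + b) :=
  pd_comparison_general N u hu c d f hpiece hQ i j hij a b hgi hgj
end

section
/- In the hyperbolic plane ℍ², let B be a horodisk and i, j two points not in B, with h_i = dist(i, B), h_j = dist(j, B), λ = dist(i, j), and let ρ_i be the angle at i between the geodesic segment ij and the perpendicular from i to B. Then cos ρ_i = (cosh λ − e^{h_j − h_i}) / sinh λ. -/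
/-!
On the geodesic semicircle `c + R e^{iθ}` one has
`cosh λ = (1 - cos α cos β) / (sin α sin β)` and `sinh λ = |cos α - cos β| / (sin α sin β)`,
while `e^{h_j - h_i} = im i / im j = sin α / sin β`. Using `sin² α = 1 - cos² α`, the right-hand
side collapses to `cos α (cos α - cos β) / |cos α - cos β|`, whose sign is read off from the
monotonicity of `cos` on `[0, π]`.
-/

open Real

namespace UpperHalfPlane

section Semicircle

variable {c R α β : ℝ} {z w : ℍ}

lemma re_eq_of_coe_eq_add_mul_exp (hz : (z : ℂ) = c + R * Complex.exp (α * Complex.I)) :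
    z.re = c + R * cos α := by
  rw [← coe_re, hz, Complex.exp_mul_I]
  simp [← Complex.ofReal_cos, ← Complex.ofReal_sin]

lemma im_eq_of_coe_eq_add_mul_exp (hz : (z : ℂ) = c + R * Complex.exp (α * Complex.I)) :
    z.im = R * sin α := by
  rw [← coe_im, hz, Complex.exp_mul_I]
  simp [← Complex.ofReal_cos, ← Complex.ofReal_sin]

lemma ne_zero_of_coe_eq_add_mul_exp (hz : (z : ℂ) = c + R * Complex.exp (α * Complex.I)) :
    R ≠ 0 := by
  rintro rfl
  simpa [im_eq_of_coe_eq_add_mul_exp hz] using z.im_pos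

variable (hz : (z : ℂ) = c + R * Complex.exp (α * Complex.I))
  (hw : (w : ℂ) = c + R * Complex.exp (β * Complex.I))
include hz hw

lemma sin_mul_sin_pos_of_coe_eq_add_mul_exp : 0 < sin α * sin β := by
  have hzw := mul_pos z.im_pos w.im_pos
  rw [im_eq_of_coe_eq_add_mul_exp hz, im_eq_of_coe_eq_add_mul_exp hw] at hzw
  nlinarith [sq_nonneg R]

lemma cosh_dist_of_coe_eq_add_mul_exp :
    cosh (dist z w) = (1 - cos α * cos β) / (sin α * sin β) := by
  have hR := ne_zero_of_coe_eq_add_mul_exp hz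
  have hsin := sin_mul_sin_pos_of_coe_eq_add_mul_exp hz hw
  have hsα : sin α ≠ 0 := left_ne_zero_of_mul hsin.ne'
  have hsβ : sin β ≠ 0 := right_ne_zero_of_mul hsin.ne'
  rw [cosh_dist', re_eq_of_coe_eq_add_mul_exp hz, re_eq_of_coe_eq_add_mul_exp hw,
    im_eq_of_coe_eq_add_mul_exp hz, im_eq_of_coe_eq_add_mul_exp hw]
  field_simp
  linear_combination R ^ 2 * (sin_sq_add_cos_sq α + sin_sq_add_cos_sq β)

lemma sinh_dist_of_coe_eq_add_mul_exp :
    sinh (dist z w) = |cos α - cos β| / (sin α * sin β) := by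
  have hsin := sin_mul_sin_pos_of_coe_eq_add_mul_exp hz hw
  have hsα : sin α ≠ 0 := left_ne_zero_of_mul hsin.ne'
  have hsβ : sin β ≠ 0 := right_ne_zero_of_mul hsin.ne'
  refine (sq_eq_sq₀ (sinh_nonneg_iff.mpr dist_nonneg) (by positivity)).mp ?_
  rw [sinh_sq, cosh_dist_of_coe_eq_add_mul_exp hz hw, div_pow, div_pow, sq_abs]
  field_simp
  linear_combination (-sin β ^ 2) * sin_sq_add_cos_sq α - (1 - cos α ^ 2) * sin_sq_add_cos_sq β

end Semicircle

end UpperHalfPlane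

lemma exp_log_div_sub_log_div {t a b : ℝ} (ht : 0 < t) (ha : 0 < a) (hb : 0 < b) :
    exp (log (t / a) - log (t / b)) = b / a := by
  rw [exp_sub, exp_log (by positivity), exp_log (by positivity)]
  field_simp

lemma cos_mul_sub_cos_div_abs {α β : ℝ} (hα : α ∈ Set.Icc 0 π) (hβ : β ∈ Set.Icc 0 π)
    (hαβ : α ≠ β) :
    cos α * (cos α - cos β) / |cos α - cos β| = if α < β then cos α else -cos α := by
  split_ifs with hlt
  · have := strictAntiOn_cos hα hβ hlt
    rw [abs_of_pos (by linarith), mul_div_assoc, div_self (by linarith), mul_one]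
  · have := strictAntiOn_cos hβ hα (lt_of_le_of_ne (not_lt.mp hlt) hαβ.symm)
    rw [abs_of_neg (by linarith), mul_div_assoc, div_neg, div_self (by linarith), mul_neg, mul_one]

open UpperHalfPlane Real in
/-- The horodisk `B` is `{im ≥ t}`, so the distance from a point `p ∉ B` to `B` is
`log (t / im p)` and the perpendicular from `p` to `B` is the upward vertical.  The points `i, j`
lie on the geodesic semicircle of radius `R` centered at `c ∈ ℝ`, at angles `α, β ∈ (0, π)`; the
cosine of the angle `ρ_i` at `i` between the segment `ij` and the upward vertical equals `cos α`
when `α < β` and `−cos α` otherwise. -/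
theorem cosine_law_semiIdeal_general (c R t α β : ℝ)
    (hα : α ∈ Set.Ioo 0 π) (hβ : β ∈ Set.Ioo 0 π) (hαβ : α ≠ β)
    (z w : ℍ)
    (hz : (z : ℂ) = c + R * Complex.exp (α * Complex.I))
    (hw : (w : ℂ) = c + R * Complex.exp (β * Complex.I))
    (hzB : z.im < t) :
    (if α < β then Real.cos α else -Real.cos α) =
      (Real.cosh (dist z w) -
          Real.exp (Real.log (t / w.im) - Real.log (t / z.im))) /
        Real.sinh (dist z w) := by
  have hsin := sin_mul_sin_pos_of_coe_eq_add_mul_exp hz hw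
  have hsα : sin α ≠ 0 := left_ne_zero_of_mul hsin.ne'
  have hsβ : sin β ≠ 0 := right_ne_zero_of_mul hsin.ne'
  have hR := ne_zero_of_coe_eq_add_mul_exp hz
  have hcos : cos α - cos β ≠ 0 := sub_ne_zero.mpr fun h =>
    hαβ (injOn_cos (Set.Ioo_subset_Icc_self hα) (Set.Ioo_subset_Icc_self hβ) h)
  rw [exp_log_div_sub_log_div (z.im_pos.trans hzB) w.im_pos z.im_pos,
    cosh_dist_of_coe_eq_add_mul_exp hz hw, sinh_dist_of_coe_eq_add_mul_exp hz hw,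
    im_eq_of_coe_eq_add_mul_exp hz, im_eq_of_coe_eq_add_mul_exp hw,
    ← cos_mul_sub_cos_div_abs (Set.Ioo_subset_Icc_self hα) (Set.Ioo_subset_Icc_self hβ) hαβ]
  field_simp
  linear_combination sin_sq_add_cos_sq α

open UpperHalfPlane Real in
/-- Cosine law for semi-ideal triangles, in the upper half-plane model.  The horodisk `B` is
`{im ≥ t}`, so the distance from a point `p ∉ B` to `B` is `log (t / im p)` and the
perpendicular from `p` to `B` is the upward vertical.  The points `i, j` lie on the geodesic
semicircle of radius `R` centered at `c ∈ ℝ`, at angles `α, β ∈ (0, π)`; the cosine of the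
angle `ρ_i` at `i` between the segment `ij` and the upward vertical equals `cos α` when
`α < β` and `−cos α` otherwise.  Then
`cos ρ_i = (cosh λ − e^{h_j − h_i}) / sinh λ` where `λ = dist i j`. -/
theorem cosine_law_semiIdeal (c R t α β : ℝ) (hR : 0 < R)
    (hα : α ∈ Set.Ioo 0 π) (hβ : β ∈ Set.Ioo 0 π) (hαβ : α ≠ β)
    (z w : ℍ)
    (hz : (z : ℂ) = c + R * Complex.exp (α * Complex.I))
    (hw : (w : ℂ) = c + R * Complex.exp (β * Complex.I))
    (hzB : z.im < t) (hwB : w.im < t) :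
    (if α < β then Real.cos α else -Real.cos α) =
      (Real.cosh (dist z w) -
          Real.exp (Real.log (t / w.im) - Real.log (t / z.im))) /
        Real.sinh (dist z w) :=
  cosine_law_semiIdeal_general c R t α β hα hβ hαβ z w hz hw hzB
end

section
/- In the hyperbolic plane, let i, j, k be three collinear points with j between i and k, let λ = dist(i, j) and μ = dist(j, k), and let B be a horodisk containing none of them, with h_p = dist(p, B) for p ∈ {i, j, k}. Then e^{h_j} = (sinh μ / sinh(λ + μ)) e^{h_i} + (sinh λ / sinh(λ + μ)) e^{h_k}. -/
/-!
On the geodesic `θ ↦ c + R e^{iθ}`, `θ ∈ (0, π)`, the quantity `s = log tan (θ / 2)` is a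
hyperbolic arc-length parameter, and the height of the point is `R sin θ = R / cosh s`. Hence
`e^{h_p} = t / im p = (t / R) cosh s_p`, and the formula is the addition-theorem identity
`sinh (s_k - s_i) cosh s_j = sinh (s_k - s_j) cosh s_i + sinh (s_j - s_i) cosh s_k`.
-/

open Real UpperHalfPlane Set

noncomputable def semicircleArcParam (θ : ℝ) : ℝ := log (tan (θ / 2))

lemma tan_half_pos_of_mem_Ioo {θ : ℝ} (hθ : θ ∈ Ioo 0 π) : 0 < tan (θ / 2) :=
  tan_pos_of_pos_of_lt_pi_div_two (by linarith [hθ.1]) (by linarith [hθ.2])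

lemma semicircleArcParam_strictMonoOn : StrictMonoOn semicircleArcParam (Ioo 0 π) :=
  fun θ₁ h₁ θ₂ h₂ h => log_lt_log (tan_half_pos_of_mem_Ioo h₁) <|
    tan_lt_tan_of_nonneg_of_lt_pi_div_two (by linarith [h₁.1]) (by linarith [h₂.2]) (by linarith)

lemma cosh_semicircleArcParam {θ : ℝ} (hθ : θ ∈ Ioo 0 π) :
    cosh (semicircleArcParam θ) = (sin θ)⁻¹ := by
  obtain ⟨x, rfl⟩ : ∃ x, θ = 2 * x := ⟨θ / 2, by ring⟩
  have hs : 0 < sin x := sin_pos_of_pos_of_lt_pi (by linarith [hθ.1]) (by linarith [hθ.2, pi_pos])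
  have hc : 0 < cos x := cos_pos_of_mem_Ioo ⟨by linarith [hθ.1, pi_pos], by linarith [hθ.2]⟩
  rw [semicircleArcParam, mul_div_cancel_left₀ x two_ne_zero, tan_eq_sin_div_cos,
    cosh_log (div_pos hs hc), sin_two_mul]
  field_simp
  linear_combination sin_sq_add_cos_sq x

lemma sinh_semicircleArcParam {θ : ℝ} (hθ : θ ∈ Ioo 0 π) :
    sinh (semicircleArcParam θ) = -cos θ / sin θ := by
  obtain ⟨x, rfl⟩ : ∃ x, θ = 2 * x := ⟨θ / 2, by ring⟩
  have hs : 0 < sin x := sin_pos_of_pos_of_lt_pi (by linarith [hθ.1]) (by linarith [hθ.2, pi_pos])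
  have hc : 0 < cos x := cos_pos_of_mem_Ioo ⟨by linarith [hθ.1, pi_pos], by linarith [hθ.2]⟩
  rw [semicircleArcParam, mul_div_cancel_left₀ x two_ne_zero, tan_eq_sin_div_cos,
    sinh_log (div_pos hs hc), sin_two_mul, cos_two_mul]
  field_simp
  linear_combination sin_sq_add_cos_sq x

lemma Real.sinh_sub_mul_cosh (a b c : ℝ) :
    sinh (c - a) * cosh b = sinh (c - b) * cosh a + sinh (b - a) * cosh c := by
  simp only [sinh_sub]
  ring

namespace UpperHalfPlane

variable {z w : ℍ} {c R θ θ₁ θ₂ : ℝ}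

lemma im_eq_of_coe_eq (hz : (z : ℂ) = c + R * Complex.exp (θ * Complex.I)) :
    z.im = R * sin θ := by
  simp [← coe_im, hz, Complex.exp_ofReal_mul_I_im]

lemma cosh_dist_of_coe_eq (hz : (z : ℂ) = c + R * Complex.exp (θ₁ * Complex.I))
    (hw : (w : ℂ) = c + R * Complex.exp (θ₂ * Complex.I)) :
    cosh (dist z w) = (1 - cos θ₁ * cos θ₂) / (sin θ₁ * sin θ₂) := by
  have hprod : R * sin θ₁ * (R * sin θ₂) ≠ 0 := by
    rw [← im_eq_of_coe_eq hz, ← im_eq_of_coe_eq hw]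
    exact (mul_pos z.im_pos w.im_pos).ne'
  have hR : R ≠ 0 := by rintro rfl; simp at hprod
  have h₁ : sin θ₁ ≠ 0 := by rintro h; simp [h] at hprod
  have h₂ : sin θ₂ ≠ 0 := by rintro h; simp [h] at hprod
  have hzw : dist (z : ℂ) w ^ 2 = 2 * R ^ 2 * (1 - cos θ₁ * cos θ₂ - sin θ₁ * sin θ₂) := by
    rw [Complex.dist_eq, hz, hw, ← Complex.normSq_eq_norm_sq, Complex.normSq_apply]
    simp [Complex.exp_ofReal_mul_I_re, Complex.exp_ofReal_mul_I_im]
    linear_combination (R ^ 2) * (sin_sq_add_cos_sq θ₁ + sin_sq_add_cos_sq θ₂)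
  rw [cosh_dist, hzw, im_eq_of_coe_eq hz, im_eq_of_coe_eq hw]
  field_simp
  ring

lemma dist_of_coe_eq (hθ₁ : θ₁ ∈ Ioo 0 π) (hθ₂ : θ₂ ∈ Ioo 0 π) (h : θ₁ ≤ θ₂)
    (hz : (z : ℂ) = c + R * Complex.exp (θ₁ * Complex.I))
    (hw : (w : ℂ) = c + R * Complex.exp (θ₂ * Complex.I)) :
    dist z w = semicircleArcParam θ₂ - semicircleArcParam θ₁ := by
  have hle := semicircleArcParam_strictMonoOn.monotoneOn hθ₁ hθ₂ h
  refine cosh_injOn dist_nonneg (sub_nonneg.2 hle) ?_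
  rw [cosh_dist_of_coe_eq hz hw, cosh_sub, cosh_semicircleArcParam hθ₁,
    cosh_semicircleArcParam hθ₂, sinh_semicircleArcParam hθ₁, sinh_semicircleArcParam hθ₂]
  have := (sin_pos_of_mem_Ioo hθ₁).ne'
  have := (sin_pos_of_mem_Ioo hθ₂).ne'
  field_simp

lemma exp_log_div_im_of_coe_eq {t : ℝ} (ht : 0 < t) (hθ : θ ∈ Ioo 0 π)
    (hz : (z : ℂ) = c + R * Complex.exp (θ * Complex.I)) :
    exp (log (t / z.im)) = t / R * cosh (semicircleArcParam θ) := by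
  rw [exp_log (div_pos ht z.im_pos), im_eq_of_coe_eq hz, cosh_semicircleArcParam hθ,
    div_mul_eq_div_div, div_eq_mul_inv]

end UpperHalfPlane

open UpperHalfPlane Real in
/-- The horodisk is `{im ≥ t}`, so the distance from a point `p` below it to the horodisk is
`log (t / im p)`. The points `i, j, k` lie on the geodesic semicircle of radius `R` centered
at `c ∈ ℝ`, at angles `α < β < γ` in `(0, π)`. -/
theorem sinh_interpolation_general (c R t α β γ : ℝ)
    (hα : α ∈ Set.Ioo 0 π) (hγ : γ ∈ Set.Ioo 0 π) (hαβ : α < β) (hβγ : β < γ)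
    (zi zj zk : ℍ)
    (hi : (zi : ℂ) = c + R * Complex.exp (α * Complex.I))
    (hj : (zj : ℂ) = c + R * Complex.exp (β * Complex.I))
    (hk : (zk : ℂ) = c + R * Complex.exp (γ * Complex.I))
    (hjB : zj.im < t) :
    Real.exp (Real.log (t / zj.im)) =
      (Real.sinh (dist zj zk) / Real.sinh (dist zi zj + dist zj zk)) *
          Real.exp (Real.log (t / zi.im)) +
        (Real.sinh (dist zi zj) / Real.sinh (dist zi zj + dist zj zk)) *
          Real.exp (Real.log (t / zk.im)) := by
  have hβ : β ∈ Ioo 0 π := ⟨hα.1.trans hαβ, hβγ.trans hγ.2⟩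
  have ht : 0 < t := zj.im_pos.trans hjB
  rw [exp_log_div_im_of_coe_eq ht hα hi, exp_log_div_im_of_coe_eq ht hβ hj,
    exp_log_div_im_of_coe_eq ht hγ hk, dist_of_coe_eq hα hβ hαβ.le hi hj,
    dist_of_coe_eq hβ hγ hβγ.le hj hk, sub_add_sub_cancel']
  set s := semicircleArcParam
  have hsinh : sinh (s γ - s α) ≠ 0 :=
    (sinh_pos_iff.2 (sub_pos.2 (semicircleArcParam_strictMonoOn hα hγ (hαβ.trans hβγ)))).ne'
  calc t / R * cosh (s β)
      = t / R * (sinh (s γ - s α) * cosh (s β)) / sinh (s γ - s α) := by field_simp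
    _ = _ := by rw [sinh_sub_mul_cosh]; ring

open UpperHalfPlane Real in
/-- Sinh-interpolation formula (Lemma 2.8), in the upper half-plane model.  The horodisk is
`{im ≥ t}`, so the distance from a point `p` below it to the horodisk is `log (t / im p)`.
Three collinear points `i, j, k` (with `j` between `i` and `k`) lie on the geodesic
semicircle of radius `R` centered at `c ∈ ℝ` at angles `α < β < γ` in `(0, π)`.  With
`λ = dist i j`, `μ = dist j k` and `h_p = dist (p, B)`:
`e^{h_j} = (sinh μ / sinh (λ+μ)) e^{h_i} + (sinh λ / sinh (λ+μ)) e^{h_k}`. -/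
theorem sinh_interpolation (c R t α β γ : ℝ) (hR : 0 < R)
    (hα : α ∈ Set.Ioo 0 π) (hγ : γ ∈ Set.Ioo 0 π) (hαβ : α < β) (hβγ : β < γ)
    (zi zj zk : ℍ)
    (hi : (zi : ℂ) = c + R * Complex.exp (α * Complex.I))
    (hj : (zj : ℂ) = c + R * Complex.exp (β * Complex.I))
    (hk : (zk : ℂ) = c + R * Complex.exp (γ * Complex.I))
    (hiB : zi.im < t) (hjB : zj.im < t) (hkB : zk.im < t) :
    Real.exp (Real.log (t / zj.im)) =
      (Real.sinh (dist zj zk) / Real.sinh (dist zi zj + dist zj zk)) *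
          Real.exp (Real.log (t / zi.im)) +
        (Real.sinh (dist zi zj) / Real.sinh (dist zi zj + dist zj zk)) *
          Real.exp (Real.log (t / zk.im)) :=
  sinh_interpolation_general c R t α β γ hα hγ hαβ hβγ zi zj zk hi hj hk hjB
end

section
/- Let B be a horodisk in ℍ² and L a geodesic line disjoint from B, and let a ∈ L be the point of L nearest to B. Then for every x ∈ L: dist(x, B) = log cosh(dist(x, a)) + dist(a, B). -/
/-!
Along the geodesic semicircle of radius `r` centred at `x₀`, the hyperbolic cosine of the
distance to its top point `x₀ + r i` is `r / im x`. Since the distance from `x` to the horodisk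
`{im ≥ t}` is `log (t / im x)`, taking logarithms splits it as `log (r / im x) + log (t / r)`.
-/

open UpperHalfPlane Real

namespace UpperHalfPlane

theorem sq_re_sub_add_sq_im_of_coe_eq {z : ℍ} {x₀ r θ : ℝ}
    (hz : (z : ℂ) = x₀ + r * Complex.exp (θ * Complex.I)) :
    (z.re - x₀) ^ 2 + z.im ^ 2 = r ^ 2 := by
  have hnorm : Complex.normSq ((z : ℂ) - x₀) = r ^ 2 := by
    rw [hz, add_sub_cancel_left, Complex.normSq_mul, Complex.normSq_ofReal,
      Complex.normSq_eq_norm_sq (Complex.exp _), Complex.norm_exp_ofReal_mul_I]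
    ring
  simpa [Complex.normSq_apply, sq] using hnorm

theorem cosh_dist_eq_div_im_of_sq_re_sub_add_sq_im {z w : ℍ} {x₀ r : ℝ}
    (hz : (z.re - x₀) ^ 2 + z.im ^ 2 = r ^ 2) (hw : (w : ℂ) = x₀ + r * Complex.I) :
    cosh (dist z w) = r / z.im := by
  have hw_re : w.re = x₀ := by simpa using congrArg Complex.re hw
  have hw_im : w.im = r := by simpa using congrArg Complex.im hw
  have hr : 0 < r := hw_im ▸ w.im_pos
  have := z.im_pos
  rw [cosh_dist', hw_re, hw_im, hz]
  field_simp
  ring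

end UpperHalfPlane

open UpperHalfPlane Real in
theorem dist_to_horodisk_along_geodesic_general (x₀ r t θ : ℝ) (hr : 0 < r) (hrt : r < t)
    (x a : ℍ)
    (hx : (x : ℂ) = x₀ + r * Complex.exp (θ * Complex.I))
    (ha : (a : ℂ) = x₀ + r * Complex.I) :
    Real.log (t / x.im) = Real.log (Real.cosh (dist x a)) + Real.log (t / r) := by
  have ht : 0 < t := hr.trans hrt
  have hx_im := x.im_pos
  rw [cosh_dist_eq_div_im_of_sq_re_sub_add_sq_im (sq_re_sub_add_sq_im_of_coe_eq hx) ha,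
    ← Real.log_mul (by positivity) (by positivity)]
  congr 1
  field_simp

open UpperHalfPlane Real in
/-- Lemma 2.7, in the upper half-plane model.  The horodisk is `B = {im ≥ t}`, the geodesic
`L` is the semicircle of radius `r` centered at `x₀ ∈ ℝ`, disjoint from `B` since `r < t`.
The point of `L` nearest to `B` is its top point `a = x₀ + r·I`, with `dist (a, B) = log (t/r)`,
and the distance from a point `x ∈ L` to `B` is `log (t / im x)`.  Then
`dist (x, B) = log cosh (dist (x, a)) + dist (a, B)`. -/
theorem dist_to_horodisk_along_geodesic (x₀ r t θ : ℝ) (hr : 0 < r) (hrt : r < t)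
    (hθ : θ ∈ Set.Ioo 0 π)
    (x a : ℍ)
    (hx : (x : ℂ) = x₀ + r * Complex.exp (θ * Complex.I))
    (ha : (a : ℂ) = x₀ + r * Complex.I) :
    Real.log (t / x.im) = Real.log (Real.cosh (dist x a)) + Real.log (t / r) :=
  dist_to_horodisk_along_geodesic_general x₀ r t θ hr hrt x a hx ha
end
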